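/- arXiv:1404.4771 — 5 statements merged into one kernel-verified Lean document; each statement's English description precedes it below -/
import Mathlib

section
/- Let η be a nonperiodic Toeplitz sequence over a finite alphabet Λ and (X, T) its associated Toeplitz flow. Then the rational subgroup ℚ(K⁰(X,T), 𝟙) is not cyclic; concretely, for every N ∈ ℕ there exist an integer p > N and functions f, g ∈ C(X,ℤ) with p·f − 1 = g − g∘T⁻¹. -/
/-- A Toeplitz sequence: every position is periodic for some period `p ≥ 1`. -/
def IsToeplitz {Λ : Type*} (η : ℤ → Λ) : Prop :=
  ∀ n : ℤ, ∃ p : ℤ, 1 ≤ p ∧ ∀ m : ℤ, η (n + m * p) = η n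

/-- A sequence is nonperiodic if it has no global period `p ≥ 1`. -/
def IsNonperiodic {Λ : Type*} (η : ℤ → Λ) : Prop :=
  ¬ ∃ p : ℤ, 1 ≤ p ∧ ∀ n : ℤ, η (n + p) = η n

/-- The two-sided shift orbit of `η` in `Λ^ℤ`. -/
def shiftOrbit {Λ : Type*} (η : ℤ → Λ) : Set (ℤ → Λ) :=
  {x | ∃ n : ℤ, x = fun k => η (k + n)}

/-- The shift homeomorphism on `Λ^ℤ`. -/
def shiftHomeo (Λ : Type*) [TopologicalSpace Λ] : (ℤ → Λ) ≃ₜ (ℤ → Λ) where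
  toFun x := fun k => x (k + 1)
  invFun x := fun k => x (k - 1)
  left_inv x := by funext k; simp
  right_inv x := by funext k; simp
  continuous_toFun := continuous_pi fun k => continuous_apply (k + 1)
  continuous_invFun := continuous_pi fun k => continuous_apply (k - 1)

/-- The phase space of the Toeplitz flow of `η`: the orbit closure of `η`. -/
def toeplitzX {Λ : Type*} [TopologicalSpace Λ] (η : ℤ → Λ) : Set (ℤ → Λ) :=
  closure (shiftOrbit η)

lemma shiftHomeo_image_orbit {Λ : Type*} [TopologicalSpace Λ] (η : ℤ → Λ) :
    shiftHomeo Λ '' shiftOrbit η = shiftOrbit η := by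
  ext x
  constructor
  · rintro ⟨y, ⟨n, rfl⟩, rfl⟩
    exact ⟨n + 1, by funext k; show η (k + 1 + n) = η (k + (n + 1)); ring_nf⟩
  · rintro ⟨n, rfl⟩
    refine ⟨fun k => η (k + (n - 1)), ⟨n - 1, rfl⟩, ?_⟩
    funext k; show η (k + 1 + (n - 1)) = η (k + n); ring_nf

lemma shiftHomeo_image_toeplitzX {Λ : Type*} [TopologicalSpace Λ] (η : ℤ → Λ) :
    shiftHomeo Λ '' toeplitzX η = toeplitzX η := by
  rw [toeplitzX, Homeomorph.image_closure, shiftHomeo_image_orbit]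

/-- The Toeplitz flow transformation: the shift restricted to the orbit
closure of `η`. -/
def toeplitzT {Λ : Type*} [TopologicalSpace Λ] (η : ℤ → Λ) :
    ↥(toeplitzX η) ≃ₜ ↥(toeplitzX η) :=
  ((shiftHomeo Λ).image (toeplitzX η)).trans
    (Homeomorph.setCongr (shiftHomeo_image_toeplitzX η))

/-!
Fix a period `p` of some position of `η` and consider the `p`-skeleton of `η`: the positions
that are `p`-periodic, with their values. Every point of the orbit closure `X` follows this
skeleton up to a shift `e`, and since `η` lies in the orbit closure of each point of `X`, the shift
is determined modulo the stabilizer `qℤ` of the skeleton. This gives a locally constant phase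
`φ : X → ℤ/q` with `φ ∘ T⁻¹ = φ - 1`, and then `f = 𝟙[φ = 0]`, `g = -val ∘ φ` satisfy
`q f - 1 = g - g ∘ T⁻¹`. Positions periodic modulo `p` are periodic modulo `q`, so if these `q`
were bounded by `N`, then `N!` would be a period of `η`.
-/

open Filter Topology

theorem ZMod.val_sub_one_eq {q : ℕ} [NeZero q] (c : ZMod q) :
    ((c - 1).val : ℤ) = c.val - 1 + if c = 0 then (q : ℤ) else 0 := by
  split_ifs with hc
  · obtain ⟨k, rfl⟩ : ∃ k, q = k + 1 := ⟨q - 1, (Nat.succ_pred_eq_of_ne_zero (NeZero.ne q)).symm⟩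
    simp [hc, ZMod.val_neg_one]
  · have hc1 : 1 ≤ c.val := Nat.one_le_iff_ne_zero.mpr ((ZMod.val_ne_zero c).mpr hc)
    have h1 : (1 : ZMod q).val = 1 := by
      rw [ZMod.val_one_eq_one_mod, Nat.mod_eq_of_lt (lt_of_le_of_lt hc1 c.val_lt)]
    rw [ZMod.val_sub (h1 ▸ hc1), h1]
    omega

theorem exists_smul_sub_one_eq_sub_comp {Y : Type*} [TopologicalSpace Y] {q : ℕ} [NeZero q]
    (S : C(Y, Y)) {φ : Y → ZMod q} (hφ : IsLocallyConstant φ) (hS : ∀ y, φ (S y) = φ y - 1) :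
    ∃ f g : C(Y, ℤ), (q : ℤ) • f - 1 = g - g.comp S := by
  refine ⟨⟨fun y => if φ y = 0 then 1 else 0,
      (hφ.comp fun c => if c = 0 then 1 else 0).continuous⟩,
    ⟨fun y => -((φ y).val : ℤ), (hφ.comp fun c => -(c.val : ℤ)).continuous⟩, ?_⟩
  ext y
  simp only [ContinuousMap.sub_apply, ContinuousMap.smul_apply, ContinuousMap.one_apply,
    ContinuousMap.comp_apply, ContinuousMap.coe_mk, smul_eq_mul, hS, ZMod.val_sub_one_eq]
  split_ifs <;> ring

section Toeplitz

variable {Λ : Type*}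

section Windows

variable [TopologicalSpace Λ] [DiscreteTopology Λ]

theorem nhds_hasBasis_window (x : ℤ → Λ) :
    (𝓝 x).HasBasis (fun _ : ℕ => True) fun R => {y | ∀ i : ℤ, |i| ≤ R → y i = x i} := by
  refine ⟨fun t => ⟨fun ht => ?_, fun ⟨R, _, hR⟩ => mem_of_superset ?_ hR⟩⟩
  · rw [nhds_pi, Filter.mem_pi] at ht
    obtain ⟨I, hI, u, hu, hIu⟩ := ht
    obtain ⟨R, hR⟩ := (hI.image Int.natAbs).bddAbove
    refine ⟨R, trivial, fun y hy => hIu fun i hi => ?_⟩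
    have hiR : |i| ≤ R := by
      rw [Int.abs_eq_natAbs]
      exact_mod_cast hR ⟨i, hi, rfl⟩
    rw [hy i hiR]
    exact mem_of_mem_nhds (hu i)
  · rw [nhds_pi, Filter.mem_pi]
    exact ⟨Set.Icc (-(R : ℤ)) R, Set.finite_Icc _ _, fun i => {x i},
      fun i => mem_nhds_discrete.mpr rfl, fun y hy i hi => hy i (abs_le.mp hi)⟩

theorem mem_closure_iff_window {S : Set (ℤ → Λ)} {x : ℤ → Λ} :
    x ∈ closure S ↔ ∀ R : ℕ, ∃ y ∈ S, ∀ i : ℤ, |i| ≤ R → y i = x i :=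
  (mem_closure_iff_nhds_basis (nhds_hasBasis_window x)).trans (by simp)

end Windows

def periodicPart (η : ℤ → Λ) (p : ℕ) : Set ℤ :=
  {n | ∀ m : ℤ, η (n + m * p) = η n}

section Periodic

variable {η : ℤ → Λ} {p : ℕ}

theorem add_mul_mem_periodicPart {n : ℤ} (hn : n ∈ periodicPart η p) (k : ℤ) :
    n + k * p ∈ periodicPart η p :=
  fun m => by rw [add_assoc, ← add_mul, hn, hn]

theorem add_mul_mem_periodicPart_iff {n k : ℤ} :
    n + k * p ∈ periodicPart η p ↔ n ∈ periodicPart η p :=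
  ⟨fun h => by simpa using add_mul_mem_periodicPart h (-k), fun h => add_mul_mem_periodicPart h k⟩

theorem periodicPart_mono {p' : ℕ} (h : p ∣ p') : periodicPart η p ⊆ periodicPart η p' := by
  obtain ⟨c, rfl⟩ := h
  intro n hn m
  simpa [mul_comm, mul_left_comm] using hn (m * c)

theorem IsToeplitz.exists_mem_periodicPart (htoe : IsToeplitz η) (n : ℤ) :
    ∃ p : ℕ, 0 < p ∧ n ∈ periodicPart η p := by
  obtain ⟨p, hp, hn⟩ := htoe n
  refine ⟨p.toNat, by omega, fun m => ?_⟩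
  rw [Int.toNat_of_nonneg (by omega)]
  exact hn m

theorem IsToeplitz.exists_finset_subset_periodicPart (htoe : IsToeplitz η) (F : Finset ℤ) :
    ∃ p : ℕ, 0 < p ∧ ↑F ⊆ periodicPart η p := by
  induction F using Finset.induction_on with
  | empty => exact ⟨1, one_pos, by simp⟩
  | insert n F _ ih =>
    obtain ⟨p, hp, hn⟩ := htoe.exists_mem_periodicPart n
    obtain ⟨p', hp', hF⟩ := ih
    refine ⟨p * p', Nat.mul_pos hp hp', ?_⟩
    rw [Finset.coe_insert, Set.insert_subset_iff]
    exact ⟨periodicPart_mono (dvd_mul_right p p') hn,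
      hF.trans (periodicPart_mono (dvd_mul_left p' p))⟩

theorem IsToeplitz.mem_toeplitzX_of_mem_toeplitzX [TopologicalSpace Λ] [DiscreteTopology Λ]
    (htoe : IsToeplitz η) {x : ℤ → Λ} (hx : x ∈ toeplitzX η) : η ∈ toeplitzX x := by
  refine mem_closure_iff_window.mpr fun R => ?_
  obtain ⟨P, hP, hPer⟩ := htoe.exists_finset_subset_periodicPart (Finset.Icc (-(R : ℤ)) R)
  obtain ⟨_, ⟨t, rfl⟩, ht⟩ := mem_closure_iff_window.mp hx (R + P)
  have hmod₀ : 0 ≤ t % P := Int.emod_nonneg t (by omega)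
  have hmod₁ : t % P < P := Int.emod_lt_of_pos t (by omega)
  -- shifting `x` back by `t % P` turns the shift by `t` into a shift by a multiple of `P`
  refine ⟨fun i => x (i + -(t % P)), ⟨-(t % P), rfl⟩, fun i hi => ?_⟩
  have hiR := abs_le.mp hi
  have hwin : |i + -(t % P)| ≤ ((R + P : ℕ) : ℤ) := by
    rw [abs_le]; push_cast; omega
  have hshift : i + -(t % P) + t = i + t / P * P := by
    have := Int.emod_add_mul_ediv t P
    linarith
  calc x (i + -(t % P)) = η (i + t / P * P) := by rw [← hshift]; exact (ht _ hwin).symm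
    _ = η i := hPer (by simpa using hiR) (t / P)

end Periodic

/-- The sequences that follow the `p`-skeleton of `η` (its `p`-periodic positions, with their
values) shifted by `e`. -/
def skeletonPhase (η : ℤ → Λ) (p : ℕ) (e : ℤ) : Set (ℤ → Λ) :=
  {y | ∀ j : ℤ, j + e ∈ periodicPart η p → y j = η (j + e)}

def skeletonStabilizer (η : ℤ → Λ) (p : ℕ) : AddSubgroup ℤ where
  carrier := {e | ∀ n, (n + e ∈ periodicPart η p ↔ n ∈ periodicPart η p) ∧
    (n ∈ periodicPart η p → η (n + e) = η n)}
  zero_mem' := by simp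
  add_mem' {a b} ha hb n := by
    rw [← add_assoc]
    exact ⟨(hb (n + a)).1.trans (ha n).1,
      fun hn => ((hb _).2 ((ha n).1.mpr hn)).trans ((ha n).2 hn)⟩
  neg_mem' {a} ha n := by
    have h := ha (n + -a)
    rw [neg_add_cancel_right] at h
    exact ⟨h.1.symm, fun hn => (h.2 (h.1.mp hn)).symm⟩

section Skeleton

variable {η : ℤ → Λ} {p : ℕ}

theorem mem_skeletonStabilizer {e : ℤ} :
    e ∈ skeletonStabilizer η p ↔ ∀ n, (n + e ∈ periodicPart η p ↔ n ∈ periodicPart η p) ∧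
      (n ∈ periodicPart η p → η (n + e) = η n) :=
  Iff.rfl

theorem natCast_mem_skeletonStabilizer : (p : ℤ) ∈ skeletonStabilizer η p := by
  refine mem_skeletonStabilizer.mpr fun n => ⟨?_, fun hn => by simpa using hn 1⟩
  simpa using add_mul_mem_periodicPart_iff (η := η) (p := p) (n := n) (k := 1)

theorem mem_skeletonStabilizer_of_mem_skeletonPhase (hp : p ≠ 0) {e : ℤ}
    (h : η ∈ skeletonPhase η p e) : e ∈ skeletonStabilizer η p := by
  have descend : ∀ n, n + e ∈ periodicPart η p → n ∈ periodicPart η p ∧ η (n + e) = η n := by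
    intro n hn
    have key : ∀ m : ℤ, η (n + m * p) = η (n + e) := fun m => by
      rw [h _ (by rw [add_right_comm]; exact add_mul_mem_periodicPart hn m), add_right_comm, hn m]
    have h0 : η n = η (n + e) := by simpa using key 0
    exact ⟨fun m => (key m).trans h0.symm, h0.symm⟩
  have descend_iter : ∀ n ∈ periodicPart η p, ∀ k : ℕ, n - k * e ∈ periodicPart η p := by
    intro n hn k
    induction k with
    | zero => simpa
    | succ k ih => exact (descend _ (by convert ih using 1; push_cast; ring)).1
  -- `e ≡ -(p - 1) e [ZMOD p]`, so going up by `e` is going down `p - 1` times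
  have ascend : ∀ n ∈ periodicPart η p, n + e ∈ periodicPart η p := by
    intro n hn
    obtain ⟨k, rfl⟩ := Nat.exists_eq_succ_of_ne_zero hp
    convert add_mul_mem_periodicPart (descend_iter n hn k) e using 1
    push_cast; ring
  exact fun n => ⟨⟨fun hn => (descend n hn).1, ascend n⟩, fun hn => (descend n (ascend n hn)).2⟩

theorem shift_mem_skeletonPhase {e : ℤ} {y : ℤ → Λ} (hy : y ∈ skeletonPhase η p e) (s : ℤ) :
    (fun j => y (j + s)) ∈ skeletonPhase η p (e + s) := by
  intro j hj
  rw [add_comm e s, ← add_assoc] at hj ⊢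
  exact hy (j + s) hj

theorem shift_self_mem_skeletonPhase (k : ℤ) : (fun j => η (j + k)) ∈ skeletonPhase η p k :=
  fun _ _ => rfl

theorem skeletonPhase_add_mul (e k : ℤ) :
    skeletonPhase η p (e + k * p) = skeletonPhase η p e := by
  ext y
  simp only [skeletonPhase, Set.mem_ofPred_eq, ← add_assoc, add_mul_mem_periodicPart_iff]
  exact forall_congr' fun j => imp_congr_right fun hj => by rw [hj k]

theorem exists_mem_range_skeletonPhase_eq (hp : p ≠ 0) (s : ℤ) :
    ∃ e ∈ Finset.range p, ∀ d, skeletonPhase η p (d + e) = skeletonPhase η p (d + s) := by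
  have hmod₀ : 0 ≤ s % p := Int.emod_nonneg s (by omega)
  have hmod₁ : s % p < p := Int.emod_lt_of_pos s (by omega)
  refine ⟨(s % p).toNat, Finset.mem_range.mpr (by omega), fun d => ?_⟩
  rw [Int.toNat_of_nonneg hmod₀, ← skeletonPhase_add_mul (d + s % p) (s / p)]
  congr 1
  have := Int.emod_add_mul_ediv s p
  linarith

theorem isClosed_skeletonPhase [TopologicalSpace Λ] [T1Space Λ] (e : ℤ) :
    IsClosed (skeletonPhase η p e) := by
  simp only [skeletonPhase, Set.ofPred_forall]
  exact isClosed_iInter fun j => isClosed_iInter fun _ =>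
    isClosed_singleton.preimage (continuous_apply j)

theorem toeplitzX_subset_iUnion_skeletonPhase [TopologicalSpace Λ] [T1Space Λ] (hp : p ≠ 0) :
    toeplitzX η ⊆ ⋃ e ∈ Finset.range p, skeletonPhase η p e := by
  refine closure_minimal ?_ (isClosed_biUnion_finset fun e _ => isClosed_skeletonPhase e)
  rintro _ ⟨s, rfl⟩
  obtain ⟨e, he, hes⟩ := exists_mem_range_skeletonPhase_eq (η := η) hp s
  have hes₀ := hes 0
  rw [zero_add, zero_add] at hes₀
  exact Set.mem_iUnion₂.mpr ⟨e, he, hes₀ ▸ shift_self_mem_skeletonPhase s⟩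

variable [TopologicalSpace Λ] [DiscreteTopology Λ]

theorem IsToeplitz.sub_mem_skeletonStabilizer (htoe : IsToeplitz η) (hp : p ≠ 0)
    {x : ℤ → Λ} (hx : x ∈ toeplitzX η) {d d' : ℤ} (hd : x ∈ skeletonPhase η p d)
    (hd' : x ∈ skeletonPhase η p d') : d - d' ∈ skeletonStabilizer η p := by
  have hsub : toeplitzX x ⊆
      ⋃ e ∈ Finset.range p, skeletonPhase η p (d + e) ∩ skeletonPhase η p (d' + e) := by
    refine closure_minimal ?_ (isClosed_biUnion_finset fun e _ =>
      (isClosed_skeletonPhase _).inter (isClosed_skeletonPhase _))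
    rintro _ ⟨s, rfl⟩
    obtain ⟨e, he, hes⟩ := exists_mem_range_skeletonPhase_eq (η := η) hp s
    exact Set.mem_iUnion₂.mpr ⟨e, he, by
      rw [hes, hes]; exact ⟨shift_mem_skeletonPhase hd s, shift_mem_skeletonPhase hd' s⟩⟩
  obtain ⟨e, -, he, he'⟩ := Set.mem_iUnion₂.mp (hsub (htoe.mem_toeplitzX_of_mem_toeplitzX hx))
  simpa using sub_mem (mem_skeletonStabilizer_of_mem_skeletonPhase hp he)
    (mem_skeletonStabilizer_of_mem_skeletonPhase hp he')

theorem IsToeplitz.exists_phase (htoe : IsToeplitz η) (hp : p ≠ 0) {q : ℕ}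
    (hq : ∀ e ∈ skeletonStabilizer η p, (q : ℤ) ∣ e) :
    ∃ φ : toeplitzX η → ZMod q, IsLocallyConstant φ ∧
      ∀ x, φ ((toeplitzT η).symm x) = φ x - 1 := by
  have hcover (x : toeplitzX η) : ∃ e < p, x.1 ∈ skeletonPhase η p e := by
    simpa using toeplitzX_subset_iUnion_skeletonPhase hp x.2
  choose d hd_range hd using hcover
  set φ : toeplitzX η → ZMod q := fun x => (d x : ZMod q)
  have hφ (x : toeplitzX η) (e : ℤ) (he : x.1 ∈ skeletonPhase η p e) : φ x = e := by
    have := (ZMod.intCast_eq_intCast_iff_dvd_sub (d x) e q).mpr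
      (hq _ (htoe.sub_mem_skeletonStabilizer hp x.2 he (hd x)))
    simpa [φ] using this
  have hfiber (s : Set (ZMod q)) : φ ⁻¹' s = Subtype.val ⁻¹'
      ⋃ e ∈ {e : ℕ | e < p ∧ (e : ZMod q) ∈ s}, skeletonPhase η p e := by
    ext x
    simp only [Set.mem_preimage, Set.mem_iUnion₂]
    constructor
    · exact fun hx => ⟨d x, ⟨hd_range x, hx⟩, hd x⟩
    · rintro ⟨e, ⟨-, he⟩, hxe⟩
      simpa [hφ x e hxe] using he
  have hclosed (s : Set (ZMod q)) : IsClosed (φ ⁻¹' s) := by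
    rw [hfiber]
    exact (((Set.finite_lt_nat p).subset fun e he => he.1).isClosed_biUnion
      fun e _ => isClosed_skeletonPhase e).preimage continuous_subtype_val
  refine ⟨φ, fun s => by simpa using (hclosed sᶜ).isOpen_compl, fun x => ?_⟩
  rw [hφ _ _ (shift_mem_skeletonPhase (hd x) (-1))]
  simp [φ, sub_eq_add_neg]

theorem IsToeplitz.exists_coboundary (htoe : IsToeplitz η) (hp : p ≠ 0) :
    ∃ q : ℕ, 0 < q ∧ periodicPart η p ⊆ periodicPart η q ∧
      ∃ f g : C(toeplitzX η, ℤ), (q : ℤ) • f - 1 =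
        g - g.comp ((toeplitzT η).symm : C(toeplitzX η, toeplitzX η)) := by
  obtain ⟨a, ha⟩ := Int.subgroup_cyclic (skeletonStabilizer η p)
  rw [← AddSubgroup.zmultiples_eq_closure, ← Int.zmultiples_natAbs] at ha
  have hmem (e : ℤ) : e ∈ skeletonStabilizer η p ↔ (a.natAbs : ℤ) ∣ e := by
    rw [ha, Int.mem_zmultiples_iff]
  have hq : a.natAbs ≠ 0 := fun h => hp <| by
    simpa [h] using (hmem p).mp natCast_mem_skeletonStabilizer
  have : NeZero a.natAbs := ⟨hq⟩
  obtain ⟨φ, hφ, hφT⟩ := htoe.exists_phase hp fun e => (hmem e).mp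
  exact ⟨a.natAbs, Nat.pos_of_ne_zero hq,
    fun n hn m => ((mem_skeletonStabilizer.mp ((hmem _).mpr (dvd_mul_left _ m))) n).2 hn,
    exists_smul_sub_one_eq_sub_comp _ hφ hφT⟩

end Skeleton

end Toeplitz

theorem toeplitz_rational_subgroup_noncyclic_general
    (Λ : Type*) [TopologicalSpace Λ] [DiscreteTopology Λ]
    (η : ℤ → Λ) (htoe : IsToeplitz η) (hnp : IsNonperiodic η) :
    ∀ N : ℕ, ∃ p : ℤ, (N : ℤ) < p ∧
      ∃ f g : C(↥(toeplitzX η), ℤ),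
        p • f - 1 = g - g.comp ((toeplitzT η).symm : C(↥(toeplitzX η), ↥(toeplitzX η))) := by
  intro N
  by_contra hN
  refine hnp ⟨N.factorial, by exact_mod_cast N.factorial_pos, fun n => ?_⟩
  obtain ⟨p, hp, hn⟩ := htoe.exists_mem_periodicPart n
  obtain ⟨q, hq, hpq, hcob⟩ := htoe.exists_coboundary hp.ne'
  have hqN : q ≤ N := by
    by_contra! hNq
    exact hN ⟨q, by exact_mod_cast hNq, hcob⟩
  simpa using periodicPart_mono (Nat.dvd_factorial hq hqN) (hpq hn) 1

/-- for a Toeplitz flow `(X, T)` the rational subgroup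
`ℚ(K⁰(X,T), 𝟙)` is not cyclic; concretely, for every `N` there are `p > N`
and `f, g ∈ C(X, ℤ)` with `p • f - 1 = g - g ∘ T⁻¹`. -/
theorem toeplitz_rational_subgroup_noncyclic
    (Λ : Type*) [Fintype Λ] [Nonempty Λ] [TopologicalSpace Λ] [DiscreteTopology Λ]
    (η : ℤ → Λ) (htoe : IsToeplitz η) (hnp : IsNonperiodic η) :
    ∀ N : ℕ, ∃ p : ℤ, (N : ℤ) < p ∧
      ∃ f g : C(↥(toeplitzX η), ℤ),
        p • f - 1 = g - g.comp ((toeplitzT η).symm : C(↥(toeplitzX η), ↥(toeplitzX η))) :=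
  toeplitz_rational_subgroup_noncyclic_general Λ η htoe hnp
end

section
/- Let X be a nonempty compact topological space and T : X → X a minimal homeomorphism (every orbit {Tⁿx : n ∈ ℤ} is dense in X), and let p ≥ 2 be an integer. If there exist continuous functions f, g : X → ℤ with p·f − 1 = g − g∘T⁻¹, then there exists a continuous function F : X → ℂ, not identically zero, such that F(Tx) = e^{2πi/p}·F(x) for all x ∈ X. -/
open Complex

/-- The full (two-sided) orbit of `x` under the homeomorphism `T`. -/
def homeoOrbit {X : Type*} [TopologicalSpace X] (T : X ≃ₜ X) (x : X) : Set X :=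
  Set.range fun n : ℤ => (T.toEquiv ^ n) x

/-- A homeomorphism is minimal if every orbit is dense. -/
def IsMinimalHomeo {X : Type*} [TopologicalSpace X] (T : X ≃ₜ X) : Prop :=
  ∀ x : X, Dense (homeoOrbit T x)

/-- on a nonempty compact space with a minimal homeomorphism `T`,
if `p • f - 1 = g - g ∘ T⁻¹` for some integer-valued continuous `f, g` and an
integer `p ≥ 2`, then `e^{2πi/p}` is a continuous eigenvalue of `T`. -/
theorem eigenvalue_of_coboundary
    (X : Type*) [TopologicalSpace X] [CompactSpace X] [Nonempty X]
    (T : X ≃ₜ X) (hT : IsMinimalHomeo T)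
    (p : ℤ) (hp : 2 ≤ p)
    (f g : C(X, ℤ))
    (hfg : p • f - 1 = g - g.comp (T.symm : C(X, X))) :
    ∃ F : C(X, ℂ), F ≠ 0 ∧
      ∀ x : X, F (T x) = Complex.exp (2 * Real.pi * Complex.I / p) * F x := by
  have hp0 : (p : ℂ) ≠ 0 := by
    exact_mod_cast (by omega : p ≠ 0)
  have hcont : Continuous fun x : X => Complex.exp (-(2 * Real.pi * Complex.I * (g x)) / p) := by
    apply Complex.continuous_exp.comp
    apply Continuous.div_const
    exact Continuous.neg <| continuous_const.mul (continuous_of_discreteTopology.comp g.continuous)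
  refine ⟨⟨_, hcont⟩, ?_, ?_⟩
  · intro h
    obtain ⟨x⟩ := ‹Nonempty X›
    have := congrArg (fun F : C(X, ℂ) => F x) h
    simp only [ContinuousMap.coe_mk] at this
    exact Complex.exp_ne_zero _ this
  · intro x
    have key : g (T x) = g x - 1 + p * f (T x) := by
      have := congrArg (fun h : C(X, ℤ) => h (T x)) hfg
      simp only [ContinuousMap.sub_apply, ContinuousMap.smul_apply, ContinuousMap.one_apply,
        ContinuousMap.comp_apply, ContinuousMap.coe_coe, Homeomorph.symm_apply_apply,
        smul_eq_mul] at this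
      linarith
    simp only [ContinuousMap.coe_mk]
    rw [key]
    push_cast
    rw [show -(2 * Real.pi * Complex.I * ((g x : ℂ) - 1 + p * (f (T x) : ℂ))) / p
        = -(2 * Real.pi * Complex.I * (g x)) / p + 2 * Real.pi * Complex.I / p
          + ((-(f (T x)) : ℤ) : ℂ) * (2 * Real.pi * Complex.I) by
      push_cast; field_simp; ring]
    rw [Complex.exp_add, Complex.exp_add, Complex.exp_int_mul_two_pi_mul_I]
    ring
end

section
/- Let X be a nonempty compact topological space and T : X → X a minimal homeomorphism (every orbit {Tⁿx : n ∈ ℤ} is dense in X), and let p ≥ 2 be an integer. If there exists a continuous function F : X → ℂ, not identically zero, with F(Tx) = e^{2πi/p}·F(x) for all x ∈ X, then there exist continuous functions f, g : X → ℤ with p·f − 1 = g − g∘T⁻¹. -/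
open Complex

section Minimal

variable {X Y : Type*} [TopologicalSpace X] {T : X ≃ₜ X}

theorem apply_zpow_apply_of_apply_eq {h : X → Y} (hinv : ∀ x, h (T x) = h x) (n : ℤ) (x : X) :
    h ((T.toEquiv ^ n) x) = h x := by
  induction n using Int.induction_on generalizing x with
  | zero => rfl
  | succ n ih => rw [zpow_add_one, Equiv.Perm.mul_apply, ih]; exact hinv x
  | pred n ih =>
    rw [zpow_sub_one, Equiv.Perm.mul_apply, ih, ← hinv]
    exact congrArg h (T.apply_symm_apply x)

theorem IsMinimalHomeo.apply_eq_of_apply_eq [TopologicalSpace Y] [T2Space Y]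
    (hT : IsMinimalHomeo T) {h : X → Y} (hc : Continuous h) (hinv : ∀ x, h (T x) = h x)
    (x y : X) : h x = h y :=
  congrFun (hc.ext_on (hT y) continuous_const fun _ ⟨n, hn⟩ =>
    hn ▸ apply_zpow_apply_of_apply_eq hinv n y) x

variable {K : Type*} [Field K] [TopologicalSpace K] [T2Space K] [ContinuousMul K]
  {F : C(X, K)} {ζ : K} {N : ℕ}

theorem IsMinimalHomeo.eigenfunction_pow_eq (hT : IsMinimalHomeo T)
    (heig : ∀ x, F (T x) = ζ * F x) (hζ : ζ ^ N = 1) (x y : X) : F x ^ N = F y ^ N :=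
  hT.apply_eq_of_apply_eq (h := fun x => F x ^ N) (F.continuous.pow N)
    (fun x => by rw [heig, mul_pow, hζ, one_mul]) x y

theorem IsMinimalHomeo.eigenfunction_ne_zero (hT : IsMinimalHomeo T)
    (heig : ∀ x, F (T x) = ζ * F x) (hζ : ζ ^ N = 1) (hN : N ≠ 0) (hF : F ≠ 0) (x : X) :
    F x ≠ 0 := by
  obtain ⟨y, hy⟩ := DFunLike.ne_iff.1 hF
  intro hx
  exact pow_ne_zero N hy (by rw [hT.eigenfunction_pow_eq heig hζ y x, hx, zero_pow hN])

end Minimal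

theorem IsPrimitiveRoot.exists_continuous_zpow_eq {X R : Type*} [TopologicalSpace X]
    [Field R] [TopologicalSpace R] [T1Space R] {ζ : R} {N : ℕ} [NeZero N]
    (hζ : IsPrimitiveRoot ζ N) {u : X → R} (hu : Continuous u) (hN : ∀ x, u x ^ N = 1) :
    ∃ g : C(X, ℤ), ∀ x, ζ ^ g x = u x := by
  let S := {z : R | z ^ N = 1}
  -- `S` is finite and `T1`, hence discrete, so any function out of it is continuous.
  have : Finite S := Set.Finite.to_subtype <|
    (Polynomial.nthRootsFinset N (1 : R)).finite_toSet.subset fun z hz =>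
      (Polynomial.mem_nthRootsFinset (NeZero.pos N) 1).2 hz
  choose log _ hlog using fun z : S => hζ.eq_pow_of_pow_eq_one z.2
  let v : C(X, S) := ⟨fun x => ⟨u x, hN x⟩, hu.subtype_mk _⟩
  refine ⟨⟨fun x => (log (v x) : ℤ),
    (continuous_of_discreteTopology (f := fun z : S => (log z : ℤ))).comp v.continuous⟩,
    fun x => ?_⟩
  simp [zpow_natCast, hlog, v]

theorem ContinuousMap.exists_zsmul_eq_of_forall_dvd {X : Type*} [TopologicalSpace X] {p : ℤ}
    (h : C(X, ℤ)) (hdvd : ∀ x, p ∣ h x) : ∃ f : C(X, ℤ), p • f = h :=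
  ⟨⟨fun x => h x / p,
    (continuous_of_discreteTopology (f := fun n : ℤ => n / p)).comp h.continuous⟩,
    ContinuousMap.ext fun x => by simp [Int.mul_ediv_cancel' (hdvd x)]⟩

theorem coboundary_of_eigenvalue_general
    (X : Type*) [TopologicalSpace X]
    (T : X ≃ₜ X) (hT : IsMinimalHomeo T)
    (p : ℤ) (hp : 2 ≤ p)
    (F : C(X, ℂ)) (hF : F ≠ 0)
    (heig : ∀ x : X, F (T x) = Complex.exp (2 * Real.pi * Complex.I / p) * F x) :
    ∃ f g : C(X, ℤ), p • f - 1 = g - g.comp (T.symm : C(X, X)) := by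
  lift p to ℕ using by omega
  have hp0 : p ≠ 0 := by omega
  have : NeZero p := ⟨hp0⟩
  simp only [Int.cast_natCast] at heig
  have hζ := isPrimitiveRoot_exp p hp0
  set ζ := exp (2 * Real.pi * I / p)
  have hζ0 : ζ ≠ 0 := hζ.ne_zero hp0
  have hpow := hT.eigenfunction_pow_eq heig hζ.pow_eq_one
  have hne := hT.eigenfunction_ne_zero heig hζ.pow_eq_one hp0 hF
  obtain ⟨x₀, -⟩ := DFunLike.ne_iff.1 hF
  obtain ⟨g, hg⟩ := hζ.exists_continuous_zpow_eq (u := fun x => F x₀ / F x)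
    (continuous_const.div F.continuous hne)
    fun x => by rw [div_pow, hpow x₀ x, div_self (pow_ne_zero _ (hne x))]
  have hdvd : ∀ x, (p : ℤ) ∣ (1 + g - g.comp (T.symm : C(X, X))) x := by
    intro x
    have hx : F x = ζ * F (T.symm x) := by rw [← heig, T.apply_symm_apply]
    rw [← hζ.zpow_eq_one_iff_dvd]
    simp only [ContinuousMap.sub_apply, ContinuousMap.add_apply, ContinuousMap.one_apply,
      ContinuousMap.comp_apply, ContinuousMap.coe_coe]
    rw [zpow_sub₀ hζ0, zpow_add₀ hζ0, zpow_one, hg, hg, hx]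
    field_simp [hne x₀, hne (T.symm x), hζ0]
  obtain ⟨f, hf⟩ := (1 + g - g.comp (T.symm : C(X, X))).exists_zsmul_eq_of_forall_dvd hdvd
  exact ⟨f, g, by rw [hf]; abel⟩

/-- on a nonempty compact space with a minimal homeomorphism `T`,
if `e^{2πi/p}` (`p ≥ 2`) is a continuous eigenvalue of `T`, then there are
integer-valued continuous `f, g` with `p • f - 1 = g - g ∘ T⁻¹`. -/
theorem coboundary_of_eigenvalue
    (X : Type*) [TopologicalSpace X] [CompactSpace X] [Nonempty X]
    (T : X ≃ₜ X) (hT : IsMinimalHomeo T)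
    (p : ℤ) (hp : 2 ≤ p)
    (F : C(X, ℂ)) (hF : F ≠ 0)
    (heig : ∀ x : X, F (T x) = Complex.exp (2 * Real.pi * Complex.I / p) * F x) :
    ∃ f g : C(X, ℤ), p • f - 1 = g - g.comp (T.symm : C(X, X)) :=
  coboundary_of_eigenvalue_general X T hT p hp F hF heig
end

section
/- Let (X, T) and (Y, S) be Cantor minimal systems and let π : X → Y be a continuous surjection with π(Tx) = S(π(x)) for all x ∈ X, which is almost one-to-one: there exists x₀ ∈ X with π⁻¹({π(x₀)}) = {x₀}. Then the quotient K⁰(X,T)/π*(K⁰(Y,S)) is torsion-free; concretely, for every f ∈ C(X,ℤ) and every integer k ≥ 1, if there exist h ∈ C(Y,ℤ) and g ∈ C(X,ℤ) with k·f = h∘π + g − g∘T⁻¹, then there exist h' ∈ C(Y,ℤ) and g' ∈ C(X,ℤ) with f = h'∘π + g' − g'∘T⁻¹. -/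
/-!
Write `g = k • q + r` with `r = g % k`. Reducing the hypothesis modulo `k` shows that the
coboundary of `r mod k` is pulled back from `Y`, so for two points `x, x'` of a common fibre the
difference `r x - r x' (mod k)` is invariant under `T`. By minimality, `(Tⁿ x, Tⁿ x')` enters any
saturated neighbourhood of the one-point fibre `{x₀}`, and on a small enough one `r` is constant;
hence `r` is constant on fibres and descends to `Y`. What remains of `k • f` is then `k` times
a coboundary plus a function pulled back from `Y`, and the latter is divisible by `k` on `Y`.
-/

open Set Function

section

variable {X Y : Type*} [TopologicalSpace X] [TopologicalSpace Y]

theorem Function.Semiconj.homeomorph_symm {π : X → Y} {T : X ≃ₜ X} {S : Y ≃ₜ Y}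
    (h : Semiconj π T S) : Semiconj π T.symm S.symm :=
  h.inverses_right T.right_inv S.left_inv

theorem homeoOrbit_subset {T : X ≃ₜ X} {E : Set X} (hT : MapsTo T E E)
    (hTsymm : MapsTo T.symm E E) {x : X} (hx : x ∈ E) : homeoOrbit T x ⊆ E := by
  rintro _ ⟨n, rfl⟩
  induction n using Int.induction_on with
  | zero => exact hx
  | succ n ih =>
    dsimp only at ih ⊢
    rw [add_comm, zpow_add, zpow_one, Equiv.Perm.mul_apply]
    exact hT ih
  | pred n ih =>
    dsimp only at ih ⊢
    rw [sub_eq_neg_add, zpow_add, zpow_neg_one, Equiv.Perm.mul_apply]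
    exact hTsymm ih

theorem IsClosedMap.exists_isOpen_preimage_subset {π : X → Y} (hπ : IsClosedMap π) {x₀ : X}
    (hx₀ : π ⁻¹' {π x₀} = {x₀}) {U : Set X} (hU : IsOpen U) (hx₀U : x₀ ∈ U) :
    ∃ V : Set Y, IsOpen V ∧ π x₀ ∈ V ∧ π ⁻¹' V ⊆ U := by
  refine ⟨(π '' Uᶜ)ᶜ, (hπ _ hU.isClosed_compl).isOpen_compl, ?_, ?_⟩
  · rintro ⟨x, hxU, hx⟩
    have hx' : x ∈ π ⁻¹' {π x₀} := hx
    rw [hx₀, mem_singleton_iff] at hx'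
    exact hxU (hx' ▸ hx₀U)
  · intro x hx
    by_contra hxU
    exact hx (mem_image_of_mem π hxU)

theorem apply_eq_apply_of_coboundary_eq_comp {A : Type*} [AddCommGroup A] {T : X ≃ₜ X}
    (hT : IsMinimalHomeo T) {S : Y ≃ₜ Y} {π : C(X, Y)} (hπ : IsClosedMap π)
    (hfac : Semiconj π T S) {x₀ : X} (hx₀ : π ⁻¹' {π x₀} = {x₀}) {φ : X → A}
    (hφ : IsLocallyConstant φ) {c : Y → A} (hc : ∀ x, φ x - φ (T.symm x) = c (π x))
    {x x' : X} (hxx' : π x = π x') : φ x = φ x' := by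
  obtain ⟨V, hVo, hx₀V, hVU⟩ :=
    hπ.exists_isOpen_preimage_subset hx₀ (hφ.isOpen_fiber (φ x₀)) rfl
  have hfac' := hfac.homeomorph_symm
  -- `φ z - φ z'` on pairs of a common fibre is `T`-invariant, so it can be read off near `x₀`
  set E : Set X := {z | ∃ z', π z = π z' ∧ φ z - φ z' = φ x - φ x'}
  have hE : homeoOrbit T x ⊆ E := by
    refine homeoOrbit_subset ?_ ?_ ⟨x', hxx', rfl⟩
    · rintro z ⟨z', hzz', hd⟩
      refine ⟨T z', by rw [hfac, hfac, hzz'], ?_⟩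
      have h₁ := hc (T z)
      have h₂ := hc (T z')
      rw [T.symm_apply_apply, hfac, hzz'] at h₁
      rw [T.symm_apply_apply, hfac] at h₂
      rw [← hd, ← sub_eq_zero, sub_sub_sub_comm, h₁, h₂, sub_self]
    · rintro z ⟨z', hzz', hd⟩
      refine ⟨T.symm z', by rw [hfac', hfac', hzz'], ?_⟩
      have h₁ := hc z
      have h₂ := hc z'
      rw [hzz'] at h₁
      rw [← hd, eq_comm, ← sub_eq_zero, sub_sub_sub_comm, h₁, h₂, sub_self]
  obtain ⟨_, hzE, hzV⟩ := (hT x).exists_mem_open (hVo.preimage π.continuous) ⟨x₀, hx₀V⟩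
  obtain ⟨z', hzz', hd⟩ := hE hzE
  have hz' : π z' ∈ V := hzz' ▸ hzV
  rw [← sub_eq_zero, ← hd, hVU hzV, hVU hz', sub_self]

theorem ContinuousMap.exists_comp_eq_of_smul_eq_comp {π : C(X, Y)} {F : C(X, ℤ)} {H : C(Y, ℤ)}
    {k : ℤ} (hk : k ≠ 0) (hF : k • F = H.comp π) : ∃ H' : C(Y, ℤ), F = H'.comp π := by
  refine ⟨⟨fun y => H y / k, (continuous_of_discreteTopology (f := (· / k))).comp H.continuous⟩,
    ?_⟩
  ext x
  have hx : k * F x = H (π x) := congr($hF x)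
  simp [← hx, hk]

theorem emod_eq_emod_of_smul_eq_comp_add_coboundary {T : X ≃ₜ X} (hT : IsMinimalHomeo T)
    {S : Y ≃ₜ Y} {π : C(X, Y)} (hπ : IsClosedMap π) (hfac : Semiconj π T S) {x₀ : X}
    (hx₀ : π ⁻¹' {π x₀} = {x₀})
    {k : ℤ} {f g : C(X, ℤ)} {h : C(Y, ℤ)} (hkf : k • f = h.comp π + g - g.comp T.symm)
    {x x' : X} (hxx' : π x = π x') : g x % k = g x' % k := by
  rw [← Int.emod_abs (g x), ← Int.emod_abs (g x'), ← Int.natCast_natAbs,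
    ← ZMod.intCast_eq_intCast_iff']
  refine apply_eq_apply_of_coboundary_eq_comp hT hπ hfac hx₀
    (φ := fun x => (g x : ZMod k.natAbs)) (c := fun y => -(h y : ZMod k.natAbs))
    (((IsLocallyConstant.iff_continuous _).2 g.continuous).comp _) (fun z => ?_) hxx'
  have hk : (k : ZMod k.natAbs) = 0 :=
    (ZMod.intCast_zmod_eq_zero_iff_dvd _ _).2 (Int.natAbs_dvd.2 dvd_rfl)
  have hz : k * f z = h (π z) + g z - g (T.symm z) := by simpa using congr($hkf z)
  have := congrArg (Int.cast : ℤ → ZMod k.natAbs) hz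
  push_cast [hk] at this
  linear_combination -this

theorem Topology.IsQuotientMap.exists_eq_smul_add_comp {π : C(X, Y)} (hπ : IsQuotientMap π)
    (k : ℤ) {g : C(X, ℤ)} (hg : ∀ x x', π x = π x' → g x % k = g x' % k) :
    ∃ (q : C(X, ℤ)) (r : C(Y, ℤ)), g = k • q + r.comp π := by
  let gmod : C(X, ℤ) :=
    ⟨fun x => g x % k, (continuous_of_discreteTopology (f := (· % k))).comp g.continuous⟩
  refine ⟨⟨fun x => g x / k, (continuous_of_discreteTopology (f := (· / k))).comp g.continuous⟩,
    hπ.lift gmod hg, ?_⟩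
  ext x
  have hr := ContinuousMap.congr_fun (hπ.lift_comp gmod hg) x
  simp only [ContinuousMap.add_apply, ContinuousMap.smul_apply, hr]
  exact (Int.mul_ediv_add_emod (g x) k).symm

theorem smul_sub_coboundary_eq_comp {T : X ≃ₜ X} {S : Y ≃ₜ Y} {π : C(X, Y)}
    (hfac : Semiconj π T S) {k : ℤ} {f g q : C(X, ℤ)} {h r : C(Y, ℤ)}
    (hkf : k • f = h.comp π + g - g.comp T.symm) (hg : g = k • q + r.comp π) :
    k • (f - q + q.comp T.symm) = (h + r - r.comp S.symm).comp π := by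
  ext x
  have hx : k * f x = h (π x) + g x - g (T.symm x) := by simpa using congr($hkf x)
  subst hg
  simp only [ContinuousMap.smul_apply, ContinuousMap.add_apply, ContinuousMap.sub_apply,
    ContinuousMap.comp_apply, ContinuousMap.coe_coe, smul_eq_mul] at hx ⊢
  rw [← hfac.homeomorph_symm x]
  linear_combination hx

end

theorem quotient_torsionFree_of_almost_one_to_one_general
    (X : Type*) [TopologicalSpace X] [CompactSpace X]
    (Y : Type*) [TopologicalSpace Y] [TopologicalSpace.MetrizableSpace Y]
    (T : X ≃ₜ X) (hT : IsMinimalHomeo T)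
    (S : Y ≃ₜ Y)
    (π : C(X, Y)) (hsurj : Function.Surjective π)
    (hfac : ∀ x : X, π (T x) = S (π x))
    (h1to1 : ∃ x₀ : X, π ⁻¹' {π x₀} = {x₀}) :
    ∀ (f : C(X, ℤ)) (k : ℤ), 1 ≤ k →
      (∃ (h : C(Y, ℤ)) (g : C(X, ℤ)),
        k • f = h.comp π + g - g.comp (T.symm : C(X, X))) →
      ∃ (h' : C(Y, ℤ)) (g' : C(X, ℤ)),
        f = h'.comp π + g' - g'.comp (T.symm : C(X, X)) := by
  rintro f k hk ⟨h, g, hkf⟩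
  obtain ⟨x₀, hx₀⟩ := h1to1
  have hπ : IsClosedMap π := π.continuous.isClosedMap
  obtain ⟨q, r, hg⟩ := (hπ.isQuotientMap π.continuous hsurj).exists_eq_smul_add_comp k
    fun x x' => emod_eq_emod_of_smul_eq_comp_add_coboundary hT hπ hfac hx₀ hkf
  obtain ⟨H, hH⟩ := ContinuousMap.exists_comp_eq_of_smul_eq_comp (by omega)
    (smul_sub_coboundary_eq_comp hfac hkf hg)
  exact ⟨H, q, by rw [← hH]; abel⟩

/-- if `π` is an almost one-to-one factor map between Cantor
minimal systems `(X, T)` and `(Y, S)`, then `K⁰(X,T) / π*(K⁰(Y,S))` is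
torsion-free: if `k • f` is, modulo coboundaries, pulled back from `Y`
(for some `k ≥ 1`), then so is `f` itself. -/
theorem quotient_torsionFree_of_almost_one_to_one
    (X : Type*) [TopologicalSpace X] [CompactSpace X] [TopologicalSpace.MetrizableSpace X]
    [TotallyDisconnectedSpace X] [Nonempty X]
    (hX : ∀ x : X, ¬ IsOpen ({x} : Set X))
    (Y : Type*) [TopologicalSpace Y] [CompactSpace Y] [TopologicalSpace.MetrizableSpace Y]
    [TotallyDisconnectedSpace Y] [Nonempty Y]
    (hY : ∀ y : Y, ¬ IsOpen ({y} : Set Y))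
    (T : X ≃ₜ X) (hT : IsMinimalHomeo T)
    (S : Y ≃ₜ Y) (hS : IsMinimalHomeo S)
    (π : C(X, Y)) (hsurj : Function.Surjective π)
    (hfac : ∀ x : X, π (T x) = S (π x))
    (h1to1 : ∃ x₀ : X, π ⁻¹' {π x₀} = {x₀}) :
    ∀ (f : C(X, ℤ)) (k : ℤ), 1 ≤ k →
      (∃ (h : C(Y, ℤ)) (g : C(X, ℤ)),
        k • f = h.comp π + g - g.comp (T.symm : C(X, X))) →
      ∃ (h' : C(Y, ℤ)) (g' : C(X, ℤ)),
        f = h'.comp π + g' - g'.comp (T.symm : C(X, X)) :=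
  quotient_torsionFree_of_almost_one_to_one_general X Y T hT S π hsurj hfac h1to1
end

section
/- Let E be a type, let l ≥ 1 be a natural number, and let W be a set of finite words over E (lists of elements of E), each of length at least l. Let m ≥ 1 and let v be a word of length m that is an infix (contiguous subword) of the concatenation u₁u₂⋯u_N of some finite sequence of words u₁, …, u_N ∈ W. Then v is an infix of the concatenation of some sequence of at most ⌈m/l⌉ + 1 words from W. -/
private lemma len_flatten_ge {E : Type*} {l : ℕ} :
    ∀ (us : List (List E)), (∀ u ∈ us, l ≤ u.length) →
      us.length * l ≤ us.flatten.length := by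
  intro us
  induction us with
  | nil => simp
  | cons a rest ih =>
    intro h
    simp only [List.flatten_cons, List.length_append, List.length_cons]
    have h1 := h a (by simp)
    have h2 := ih (fun u hu => h u (by simp [hu]))
    nlinarith

private lemma prefix_flatten_take {E : Type*} {l : ℕ} (us : List (List E))
    (hW : ∀ u ∈ us, l ≤ u.length) (v : List E) (hv : v <+: us.flatten)
    (k : ℕ) (hk : v.length ≤ k * l) : v <+: (us.take k).flatten := by
  by_cases hku : us.length ≤ k
  · rwa [List.take_of_length_le hku]
  push_neg at hku
  have hpre : (us.take k).flatten <+: us.flatten := by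
    refine ⟨(us.drop k).flatten, ?_⟩
    rw [← List.flatten_append, List.take_append_drop]
  refine List.prefix_of_prefix_length_le hv hpre ?_
  have hlen : (us.take k).length = k := by
    rw [List.length_take]; omega
  have hge := len_flatten_ge (l := l) (us.take k)
    (fun u hu => hW u (List.take_subset k us hu))
  rw [hlen] at hge
  omega

private lemma suffix_append_prefix_infix {E : Type*} {s p x y : List E}
    (hs : s <:+ x) (hp : p <+: y) : (s ++ p) <:+: (x ++ y) := by
  obtain ⟨x₁, hx⟩ := hs
  obtain ⟨y₂, hy⟩ := hp
  exact ⟨x₁, y₂, by rw [← hx, ← hy]; simp⟩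

/-- if every word in `W` has length at least `l ≥ 1`, and `v` is a
word of length `m ≥ 1` which is an infix of a concatenation of words from `W`,
then `v` is an infix of a concatenation of at most `⌈m/l⌉ + 1` words from `W`. -/
theorem infix_concat_short
    (E : Type*) (l : ℕ) (hl : 1 ≤ l)
    (W : Set (List E)) (hW : ∀ w ∈ W, l ≤ w.length)
    (m : ℕ) (hm : 1 ≤ m) (v : List E) (hv : v.length = m)
    (us : List (List E)) (hus : ∀ u ∈ us, u ∈ W)
    (hinf : v <:+: us.flatten) :
    ∃ us' : List (List E),
      (∀ u ∈ us', u ∈ W) ∧ us'.length ≤ m ⌈/⌉ l + 1 ∧ v <:+: us'.flatten := by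
  induction us with
  | nil =>
    simp only [List.flatten_nil] at hinf
    have h0 : v.length ≤ 0 := by simpa using hinf.sublist.length_le
    omega
  | cons a rest ih =>
    have haW : a ∈ W := hus a (by simp)
    have hrest : ∀ u ∈ rest, u ∈ W := fun u hu => hus u (by simp [hu])
    by_cases h : v <:+: rest.flatten
    · exact ih hrest h
    obtain ⟨p, s, hps⟩ := hinf
    rw [List.flatten_cons] at hps
    have hpa : p.length < a.length := by
      by_contra hcon
      push_neg at hcon
      apply h
      have : rest.flatten = (a ++ rest.flatten).drop a.length := by simp
      rw [← hps, List.append_assoc, List.drop_append_of_le_length hcon] at this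
      exact ⟨p.drop a.length, s, by rw [List.append_assoc]; exact this.symm⟩
    set suf := a.drop p.length with hsuf
    have hsuflen : suf.length = a.length - p.length := by simp [hsuf]
    have hkey : v ++ s = suf ++ rest.flatten := by
      have : (p ++ (v ++ s)).drop p.length = (a ++ rest.flatten).drop p.length := by
        rw [← List.append_assoc, hps]
      rwa [List.drop_left, List.drop_append_of_le_length hpa.le] at this
    by_cases hms : m ≤ suf.length
    · -- v fits inside a
      have hvpre : v <+: suf ++ rest.flatten := ⟨s, hkey⟩
      have hvs : v <+: suf :=
        List.prefix_of_prefix_length_le hvpre (suf.prefix_append _) (by omega)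
      refine ⟨[a], by simpa using haW, by simp, ?_⟩
      have : v <:+: a := hvs.isInfix.trans (List.drop_suffix _ _).isInfix
      simpa using this
    · push_neg at hms
      have hsufv : suf <+: v := by
        refine List.prefix_of_prefix_length_le ⟨rest.flatten, hkey.symm⟩
          (v.prefix_append s) (by omega)
      obtain ⟨v₂, hv2⟩ := hsufv
      have hv2len : v₂.length = m - suf.length := by
        have := congrArg List.length hv2
        simp at this; omega
      have hv2pre : v₂ <+: rest.flatten := by
        have : suf ++ (v₂ ++ s) = suf ++ rest.flatten := by
          rw [← List.append_assoc, hv2, hkey]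
        exact ⟨s, by simpa using this⟩
      set k := v₂.length ⌈/⌉ l with hk
      have hle : v₂.length ≤ k * l := by
        have := le_smul_ceilDiv (b := v₂.length) (Nat.lt_of_lt_of_le Nat.zero_lt_one hl)
        simpa [hk, Nat.mul_comm] using this
      have hv2take := prefix_flatten_take rest (fun u hu => hW u (hrest u hu)) v₂ hv2pre k hle
      refine ⟨a :: rest.take k, ?_, ?_, ?_⟩
      · intro u hu
        rcases List.mem_cons.1 hu with rfl | hu
        · exact haW
        · exact hrest u (List.take_subset k rest hu)
      · have hkm : k ≤ m ⌈/⌉ l := by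
          rw [hk, Nat.ceilDiv_eq_add_pred_div, Nat.ceilDiv_eq_add_pred_div]
          exact Nat.div_le_div_right (by omega)
        simp only [List.length_cons]
        have := List.length_take_le k rest
        omega
      · rw [List.flatten_cons, ← hv2]
        exact suffix_append_prefix_infix (List.drop_suffix _ _) hv2take
end
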